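/- arXiv:1401.1725 — 2 statements merged into one kernel-verified Lean document; each statement's English description precedes it below -/
import Mathlib

section
/- Let 𝟎 = (0^{n₀}, 1^{n₁}, 2^{n₂}) be an identity string and let x ∈ {0,1,2} be a simple label that occurs in 𝟎. Then there exists a unique single row of matching puzzle pieces (a horizontal strip of height one made of upward and downward triangles from the eight puzzle pieces) whose left border label is x and whose bottom border labels read 𝟎 from right to left. Moreover, the right border label of this row is x, and the top border labels form the identity string obtained by removing one copy of x from 𝟎. -/
/-!
Two edges of a piece determine the third, so along a row the left edge and the bottom of an
upward triangle fix its right edge `r`. The following downward triangle is fixed only together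
with the next upward triangle: `r` and the next bottom `b'` determine their shared edge as long
as `r` lies over a bottom `b ≥ b'`. Hence over a weakly decreasing bottom word a row is
determined by its left border.

For existence write the bottom word as `bigs ++ x :: smalls` with `x ≤ bigs` and `smalls < x`.
Over `bigs` the label `x` sits on the left edges, the right edges carrying the composed labels
`bx`; over `x :: smalls` it sits on the right edges, the left edges carrying `xc`. The tops
then read `bigs ++ smalls`.
-/

/-- The eight puzzle pieces, as clockwise triples of edge labels. -/
def puzzleBase : List (ℕ × ℕ × ℕ) :=
  [(0,0,0),(1,1,1),(2,2,2),(3,1,0),(4,2,1),(5,2,0),(6,2,3),(7,4,0)]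

/-- Cyclic rotation of a triple (rotating the triangle). -/
def rot3 (t : ℕ × ℕ × ℕ) : ℕ × ℕ × ℕ := (t.2.2, t.1, t.2.1)

/-- A triple of labels, read clockwise, is an allowed puzzle piece (rotations allowed). -/
def IsPiece (t : ℕ × ℕ × ℕ) : Prop :=
  t ∈ puzzleBase ∨ rot3 t ∈ puzzleBase ∨ rot3 (rot3 t) ∈ puzzleBase

/-- A single row of a triangular puzzle: m upward triangles with edges
(lfts j, rgts j, bots j) and m−1 downward triangles with clockwise edges
(tops j, lfts (j+1), rgts j).  The left border edge is lfts 0 and the right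
border edge is rgts (m−1). -/
def IsRow (lfts rgts tops bots : List ℕ) : Prop :=
  rgts.length = lfts.length ∧ bots.length = lfts.length ∧
  tops.length + 1 = lfts.length ∧
  (∀ j, j < lfts.length → IsPiece (lfts.getD j 8, rgts.getD j 8, bots.getD j 8)) ∧
  (∀ j, j + 1 < lfts.length → IsPiece (tops.getD j 8, lfts.getD (j+1) 8, rgts.getD j 8))

/-- The identity string (0^{n₀}, 1^{n₁}, 2^{n₂}). -/
def idString3 (n₀ n₁ n₂ : ℕ) : List ℕ :=
  List.replicate n₀ 0 ++ List.replicate n₁ 1 ++ List.replicate n₂ 2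

def pieces : List (ℕ × ℕ × ℕ) :=
  puzzleBase.flatMap fun p => [p, rot3 p, rot3 (rot3 p)]

lemma isPiece_iff_mem_pieces {t : ℕ × ℕ × ℕ} : IsPiece t ↔ t ∈ pieces := by
  simp only [IsPiece, pieces, List.mem_flatMap, List.mem_cons, List.not_mem_nil, or_false]
  constructor
  · rintro (h | h | h)
    exacts [⟨t, h, .inl rfl⟩, ⟨rot3 t, h, .inr (.inr rfl)⟩, ⟨rot3 (rot3 t), h, .inr (.inl rfl)⟩]
  · rintro ⟨p, hp, rfl | rfl | rfl⟩
    exacts [.inl hp, .inr (.inr hp), .inr (.inl hp)]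

lemma IsPiece.rot3 {t : ℕ × ℕ × ℕ} (h : IsPiece t) : IsPiece (rot3 t) := by
  rcases h with h | h | h
  exacts [.inr (.inr h), .inl h, .inr (.inl h)]

lemma IsPiece.fst_eq {a a' b c : ℕ} (h : IsPiece (a, b, c)) (h' : IsPiece (a', b, c)) :
    a = a' := by
  rw [isPiece_iff_mem_pieces] at h h'
  have key : ∀ p ∈ pieces, ∀ q ∈ pieces, p.2 = q.2 → p.1 = q.1 := by decide
  exact key _ h _ h' rfl

lemma IsPiece.snd_eq {a b b' c : ℕ} (h : IsPiece (a, b, c)) (h' : IsPiece (a, b', c)) :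
    b = b' :=
  h.rot3.rot3.fst_eq h'.rot3.rot3

-- For `b = r = 1` and `b' = 2` each of `(1,1,1)`, `(0,3,1)`, `(4,2,1)` extends, hence `b' ≤ b`.
lemma left_eq_of_rhombus {l r b t₁ l₁ r₁ t₂ l₂ r₂ b' : ℕ} (hb : b ≤ 2) (hb' : b' ≤ b)
    (h : IsPiece (l, r, b)) (h₁ : IsPiece (t₁, l₁, r)) (h₁' : IsPiece (l₁, r₁, b'))
    (h₂ : IsPiece (t₂, l₂, r)) (h₂' : IsPiece (l₂, r₂, b')) : l₁ = l₂ := by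
  simp only [isPiece_iff_mem_pieces] at h h₁ h₁' h₂ h₂'
  have key : ∀ p ∈ pieces, p.2.2 ≤ 2 → ∀ q₁ ∈ pieces, q₁.2.2 = p.2.1 →
      ∀ u₁ ∈ pieces, u₁.1 = q₁.2.1 → u₁.2.2 ≤ p.2.2 → ∀ q₂ ∈ pieces, q₂.2.2 = p.2.1 →
      ∀ u₂ ∈ pieces, u₂.1 = q₂.2.1 → u₂.2.2 = u₁.2.2 → q₁.2.1 = q₂.2.1 := by
    decide
  exact key _ h hb _ h₁ rfl _ h₁' rfl hb' _ h₂ rfl _ h₂' rfl rfl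

lemma IsRow.ne_nil {L R T bs : List ℕ} (h : IsRow L R T bs) : L ≠ [] := by
  rintro rfl
  simpa using h.2.2.1

lemma not_isRow_nil {L R T : List ℕ} : ¬ IsRow L R T [] := fun h =>
  h.ne_nil (List.length_eq_zero_iff.1 h.2.1.symm)

lemma IsRow.isPiece_head {L R T bs : List ℕ} {b : ℕ} (h : IsRow L R T (b :: bs)) :
    IsPiece (L.getD 0 8, R.getD 0 8, b) :=
  h.2.2.2.1 0 (List.length_pos_iff.2 h.ne_nil)

lemma isRow_singleton {l r b : ℕ} : IsRow [l] [r] [] [b] ↔ IsPiece (l, r, b) := by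
  simp [IsRow]

lemma isRow_cons {l r t b : ℕ} {L R T bs : List ℕ} (hL : L ≠ []) :
    IsRow (l :: L) (r :: R) (t :: T) (b :: bs) ↔
      IsPiece (l, r, b) ∧ IsPiece (t, L.getD 0 8, r) ∧ IsRow L R T bs := by
  obtain ⟨l', L, rfl⟩ := List.exists_cons_of_ne_nil hL
  simp only [IsRow, List.length_cons, Nat.forall_lt_succ_left, List.getD_cons_zero,
    List.getD_cons_succ, Nat.add_lt_add_iff_right, Nat.add_right_cancel_iff]
  tauto

lemma IsRow.exists_of_singleton {L R T : List ℕ} {b : ℕ} (h : IsRow L R T [b]) :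
    ∃ l r, L = [l] ∧ R = [r] ∧ T = [] ∧ IsPiece (l, r, b) := by
  obtain ⟨hR, hb, hT, -⟩ := id h
  rcases L with _ | ⟨l, _ | ⟨l', L⟩⟩ <;> rcases R with _ | ⟨r, _ | ⟨r', R⟩⟩ <;>
    rcases T with _ | ⟨t, T⟩ <;> simp at hR hb hT
  exact ⟨l, r, rfl, rfl, rfl, isRow_singleton.1 h⟩

lemma IsRow.exists_of_cons_cons {L R T bs : List ℕ} {b b' : ℕ}
    (h : IsRow L R T (b :: b' :: bs)) :
    ∃ l r t L' R' T', L = l :: L' ∧ R = r :: R' ∧ T = t :: T' ∧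
      IsPiece (l, r, b) ∧ IsPiece (t, L'.getD 0 8, r) ∧ IsRow L' R' T' (b' :: bs) := by
  obtain ⟨hR, hb, hT, -⟩ := id h
  rcases L with _ | ⟨l, _ | ⟨l', L⟩⟩ <;> rcases R with _ | ⟨r, R⟩ <;>
    rcases T with _ | ⟨t, T⟩ <;> simp at hR hb hT
  exact ⟨l, r, t, l' :: L, R, T, rfl, rfl, rfl, (isRow_cons (List.cons_ne_nil _ _)).1 h⟩

lemma IsRow.unique {bs L₁ R₁ T₁ L₂ R₂ T₂ : List ℕ} (hdec : bs.IsChain (· ≥ ·))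
    (hle : ∀ b ∈ bs, b ≤ 2) (h₁ : IsRow L₁ R₁ T₁ bs) (h₂ : IsRow L₂ R₂ T₂ bs)
    (hL : L₁.getD 0 8 = L₂.getD 0 8) : L₁ = L₂ ∧ R₁ = R₂ ∧ T₁ = T₂ := by
  induction bs generalizing L₁ R₁ T₁ L₂ R₂ T₂ with
  | nil => exact (not_isRow_nil h₁).elim
  | cons b bs ih =>
    cases bs with
    | nil =>
      obtain ⟨l₁, r₁, rfl, rfl, rfl, up₁⟩ := h₁.exists_of_singleton
      obtain ⟨l₂, r₂, rfl, rfl, rfl, up₂⟩ := h₂.exists_of_singleton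
      obtain rfl : l₁ = l₂ := hL
      simp [up₁.snd_eq up₂]
    | cons b' bs =>
      obtain ⟨l₁, r₁, t₁, L₁, R₁, T₁, rfl, rfl, rfl, up₁, down₁, row₁⟩ := h₁.exists_of_cons_cons
      obtain ⟨l₂, r₂, t₂, L₂, R₂, T₂, rfl, rfl, rfl, up₂, down₂, row₂⟩ := h₂.exists_of_cons_cons
      obtain rfl : l₁ = l₂ := hL
      obtain rfl : r₁ = r₂ := up₁.snd_eq up₂
      rw [List.isChain_cons_cons] at hdec
      have hb : b ≤ 2 := hle b List.mem_cons_self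
      have next : L₁.getD 0 8 = L₂.getD 0 8 :=
        left_eq_of_rhombus hb hdec.1 up₁ down₁ row₁.isPiece_head down₂ row₂.isPiece_head
      obtain rfl : t₁ = t₂ := down₁.fst_eq (next ▸ down₂)
      obtain ⟨rfl, rfl, rfl⟩ :=
        ih hdec.2 (fun c hc => hle c (List.mem_cons_of_mem _ hc)) row₁ row₂ next
      simp

-- The composed label `ab` of the paper (`3 = 10`, `4 = 21`, `5 = 20`), extended by `aa = a`.
def compLabel : ℕ → ℕ → ℕ
  | 1, 0 => 3
  | 2, 1 => 4
  | 2, 0 => 5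
  | a, _ => a

lemma compLabel_self (a : ℕ) : compLabel a a = a := by
  rcases a with _ | _ | _ | a <;> rfl

lemma isPiece_compLabel {a c : ℕ} (hca : c ≤ a) (ha : a ≤ 2) :
    IsPiece (compLabel a c, a, c) := by
  rw [isPiece_iff_mem_pieces]
  interval_cases a <;> interval_cases c <;> decide

lemma isRow_const_right {x c : ℕ} {cs : List ℕ} (hx : x ≤ 2) (hc : c ≤ x)
    (hcs : ∀ c ∈ cs, c ≤ x) :
    IsRow ((c :: cs).map (compLabel x)) (List.replicate (cs.length + 1) x) cs (c :: cs) := by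
  induction cs generalizing c with
  | nil => exact isRow_singleton.2 (isPiece_compLabel hc hx)
  | cons c' cs ih =>
    have hc' : c' ≤ x := hcs c' List.mem_cons_self
    exact (isRow_cons (List.cons_ne_nil _ _)).2 ⟨isPiece_compLabel hc hx,
      (isPiece_compLabel hc' hx).rot3, ih hc' fun c h => hcs c (List.mem_cons_of_mem _ h)⟩

lemma IsRow.append_const_left {x : ℕ} {bigs L R T bs : List ℕ}
    (hbigs : ∀ b ∈ bigs, x ≤ b ∧ b ≤ 2) (h : IsRow L R T bs) (hL : L.getD 0 8 = x) :
    IsRow (List.replicate bigs.length x ++ L) (bigs.map (compLabel · x) ++ R) (bigs ++ T)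
      (bigs ++ bs) := by
  induction bigs with
  | nil => exact h
  | cons b bigs ih =>
    obtain ⟨hxb, hb⟩ := hbigs b List.mem_cons_self
    have h' := ih fun c hc => hbigs c (List.mem_cons_of_mem _ hc)
    have hhead : (List.replicate bigs.length x ++ L).getD 0 8 = x := by
      cases bigs with
      | nil => exact hL
      | cons => rfl
    refine (isRow_cons h'.ne_nil).2 ⟨(isPiece_compLabel hxb hb).rot3, ?_, h'⟩
    rw [hhead]
    exact (isPiece_compLabel hxb hb).rot3.rot3

lemma isRow_crossing {x : ℕ} {bigs smalls : List ℕ} (hx : x ≤ 2)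
    (hbigs : ∀ b ∈ bigs, x ≤ b ∧ b ≤ 2) (hsmalls : ∀ s ∈ smalls, s ≤ x) :
    IsRow (List.replicate bigs.length x ++ (x :: smalls).map (compLabel x))
      (bigs.map (compLabel · x) ++ List.replicate (smalls.length + 1) x) (bigs ++ smalls)
      (bigs ++ x :: smalls) :=
  (isRow_const_right hx le_rfl hsmalls).append_const_left hbigs (by simp [compLabel_self])

lemma row_filling_of_sorted {w : List ℕ} {x : ℕ} (hw : w.Pairwise (· ≤ ·))
    (hw2 : ∀ a ∈ w, a ≤ 2) (hx : x ∈ w) :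
    (∃! r : List ℕ × List ℕ × List ℕ, IsRow r.1 r.2.1 r.2.2 w.reverse ∧ r.1.getD 0 8 = x) ∧
    ∀ lfts rgts tops, IsRow lfts rgts tops w.reverse → lfts.getD 0 8 = x →
      rgts.getD (lfts.length - 1) 8 = x ∧ tops.reverse = w.erase x := by
  have hdec : w.reverse.IsChain (· ≥ ·) := (List.pairwise_reverse.2 hw).isChain
  have hle : ∀ a ∈ w.reverse, a ≤ 2 := fun a ha => hw2 a (List.mem_reverse.1 ha)
  obtain ⟨s, t, rfl, hxs⟩ := List.eq_append_cons_of_mem hx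
  have hs : ∀ a ∈ s.reverse, a ≤ x := fun a ha =>
    (List.pairwise_append.1 hw).2.2 a (List.mem_reverse.1 ha) x List.mem_cons_self
  have ht : ∀ b ∈ t.reverse, x ≤ b ∧ b ≤ 2 := fun b hb =>
    ⟨(List.pairwise_cons.1 (List.pairwise_append.1 hw).2.1).1 b (List.mem_reverse.1 hb),
      hw2 b (by simp_all)⟩
  have hbots : (s ++ x :: t).reverse = t.reverse ++ x :: s.reverse := by simp
  rw [hbots] at hdec hle ⊢
  have hrow := isRow_crossing (hw2 x hx) ht hs
  set L := List.replicate t.reverse.length x ++ (x :: s.reverse).map (compLabel x)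
  set R := t.reverse.map (compLabel · x) ++ List.replicate (s.reverse.length + 1) x
  set T := t.reverse ++ s.reverse
  have hL : L.getD 0 8 = x := by
    simp only [L, List.map_cons, compLabel_self]
    cases t.reverse.length <;> rfl
  have huniq : ∀ L' R' T', IsRow L' R' T' (t.reverse ++ x :: s.reverse) → L'.getD 0 8 = x →
      L' = L ∧ R' = R ∧ T' = T := fun L' R' T' h h' => h.unique hdec hle hrow (h'.trans hL.symm)
  refine ⟨⟨(L, R, T), ⟨hrow, hL⟩, fun r hr => ?_⟩, fun L' R' T' h h' => ?_⟩
  · obtain ⟨h1, h2, h3⟩ := huniq _ _ _ hr.1 hr.2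
    exact Prod.ext h1 (Prod.ext h2 h3)
  · obtain ⟨rfl, rfl, rfl⟩ := huniq _ _ _ h h'
    refine ⟨?_, by simp [T, List.erase_append_right _ hxs]⟩
    rw [List.getD_append_right _ _ _ _ (by simp [L]), List.getD_replicate _ (by simp [L])]

lemma pairwise_le_idString3 (n₀ n₁ n₂ : ℕ) : (idString3 n₀ n₁ n₂).Pairwise (· ≤ ·) := by
  simp [idString3, List.pairwise_append, List.pairwise_replicate, List.mem_replicate]

lemma le_two_of_mem_idString3 {n₀ n₁ n₂ a : ℕ} (h : a ∈ idString3 n₀ n₁ n₂) : a ≤ 2 := by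
  simp only [idString3, List.mem_append, List.mem_replicate] at h
  omega

theorem unique_row_filling_general (n₀ n₁ n₂ x : ℕ)
    (hocc : x ∈ idString3 n₀ n₁ n₂) :
    (∃! r : List ℕ × List ℕ × List ℕ,
      IsRow r.1 r.2.1 r.2.2 (idString3 n₀ n₁ n₂).reverse ∧ r.1.getD 0 8 = x) ∧
    (∀ lfts rgts tops, IsRow lfts rgts tops (idString3 n₀ n₁ n₂).reverse →
      lfts.getD 0 8 = x →
      rgts.getD (lfts.length - 1) 8 = x ∧
      tops.reverse = (idString3 n₀ n₁ n₂).erase x) :=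
  row_filling_of_sorted (pairwise_le_idString3 n₀ n₁ n₂) (fun _ => le_two_of_mem_idString3) hocc

/-- Lemma on row fillings: there is a unique single row with left border label x and
bottom border reading the identity string right-to-left; its right border label is x
and its top border reads, right-to-left, the identity string with one x removed. -/
theorem unique_row_filling (n₀ n₁ n₂ x : ℕ) (hx : x ≤ 2)
    (hocc : x ∈ idString3 n₀ n₁ n₂) :
    (∃! r : List ℕ × List ℕ × List ℕ,
      IsRow r.1 r.2.1 r.2.2 (idString3 n₀ n₁ n₂).reverse ∧ r.1.getD 0 8 = x) ∧
    (∀ lfts rgts tops, IsRow lfts rgts tops (idString3 n₀ n₁ n₂).reverse →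
      lfts.getD 0 8 = x →
      rgts.getD (lfts.length - 1) 8 = x ∧
      tops.reverse = (idString3 n₀ n₁ n₂).erase x) :=
  unique_row_filling_general n₀ n₁ n₂ x hocc
end

section
/- In the proof of the uniqueness of row fillings: a single row of puzzle pieces whose bottom border is an identity string (0^{n₀},1^{n₁},2^{n₂}) read right-to-left and whose left border label is 0 must be tiled, from left to right, by exactly the following pieces: the rhombus with left/right labels 0 and top/bottom labels 2 above each bottom 2; the rhombus with left/right labels 0 and top/bottom labels 1 above each bottom 1; exactly one upward triangle with all labels 0 (above the first bottom 0); and rhombi with all labels 0 above the remaining bottom 0s. In particular the tiling exists and is unique. -/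
/-!
Read the row from left to right. A left label `0` above a bottom label `b ≤ 2` forces the upward
triangle `(0, diagLabel b, b)`. The downward triangle glued to its right edge must then be
`(b, 0, diagLabel b)`: every other piece fitting there leaves a left label on which no upward
triangle with the next bottom label `b' ≤ b` fits. Hence all left labels are `0`, by induction,
and the right and top labels are read off from the bottom ones.
-/

/-- The label on the internal edge of the rhombus with left and right labels `0` and top and
bottom labels `b`. -/
def diagLabel : ℕ → ℕ
  | 1 => 3
  | 2 => 5
  | _ => 0

lemma isPiece_up_diagLabel {b : ℕ} (hb : b ≤ 2) : IsPiece (0, diagLabel b, b) := by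
  interval_cases b <;> unfold IsPiece <;> decide

lemma isPiece_down_diagLabel {b : ℕ} (hb : b ≤ 2) : IsPiece (b, 0, diagLabel b) := by
  interval_cases b <;> unfold IsPiece <;> decide

lemma eq_diagLabel_of_isPiece {r b : ℕ} (hb : b ≤ 2) (h : IsPiece (0, r, b)) :
    r = diagLabel b := by
  interval_cases b <;> simp [IsPiece, puzzleBase, rot3, diagLabel] at h ⊢ <;> omega

/-- Without `b' ≤ b` this fails: after `(0, 0, 0)` the pieces `(3, 1, 0)` and `(1, 1, 1)` fit. -/
lemma down_eq_of_isPiece {b b' r t l r' : ℕ} (hb : b ≤ 2) (hb' : b' ≤ b)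
    (hup : IsPiece (0, r, b)) (hdown : IsPiece (t, l, r)) (hnext : IsPiece (l, r', b')) :
    t = b ∧ l = 0 := by
  obtain rfl := eq_diagLabel_of_isPiece hb hup
  interval_cases b <;> interval_cases b' <;>
    simp [IsPiece, puzzleBase, rot3, diagLabel, Prod.ext_iff] at hdown hnext ⊢ <;> omega

lemma List.getD_mem {α : Type*} {l : List α} {j : ℕ} (d : α) (hj : j < l.length) :
    l.getD j d ∈ l :=
  List.getD_eq_getElem _ _ hj ▸ List.getElem_mem hj

lemma List.Pairwise.rel_getD_succ {α : Type*} {R : α → α → Prop} {l : List α}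
    (hl : l.Pairwise R) {j : ℕ} (d : α) (hj : j + 1 < l.length) :
    R (l.getD j d) (l.getD (j + 1) d) := by
  rw [List.getD_eq_getElem _ _ hj, List.getD_eq_getElem _ _ (by omega)]
  exact List.pairwise_iff_getElem.mp hl _ _ _ _ (Nat.lt_succ_self j)

theorem isRow_diagLabel {bots : List ℕ} (hne : bots ≠ []) (hle : ∀ b ∈ bots, b ≤ 2) :
    IsRow (List.replicate bots.length 0) (bots.map diagLabel) bots.dropLast bots := by
  have hlen : 0 < bots.length := List.length_pos_iff.mpr hne
  refine ⟨by simp, by simp, by simp; omega, fun j hj => ?_, fun j hj => ?_⟩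
  · have hj : j < bots.length := by simpa using hj
    simpa [List.getD_eq_getElem?_getD, hj] using isPiece_up_diagLabel (hle _ (List.getElem_mem hj))
  · have hj : j + 1 < bots.length := by simpa using hj
    simpa [List.getD_eq_getElem?_getD, List.getElem?_dropLast, hj,
      show j < bots.length - 1 by omega, show j < bots.length by omega]
      using isPiece_down_diagLabel (hle _ (List.getElem_mem (show j < bots.length by omega)))

section
variable {lfts rgts tops bots : List ℕ}

theorem IsRow.rhombus_of_getD_lfts_eq_zero (hrow : IsRow lfts rgts tops bots)
    (hle : ∀ b ∈ bots, b ≤ 2) (hanti : bots.Pairwise (· ≥ ·)) {j : ℕ}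
    (hj : j + 1 < lfts.length) (h0 : lfts.getD j 8 = 0) :
    tops.getD j 8 = bots.getD j 8 ∧ lfts.getD (j + 1) 8 = 0 := by
  obtain ⟨-, hbots, -, hup, hdown⟩ := hrow
  have hup_j := hup j (by omega)
  rw [h0] at hup_j
  exact down_eq_of_isPiece (hle _ (bots.getD_mem 8 (by omega)))
    (hanti.rel_getD_succ 8 (by omega)) hup_j (hdown j hj) (hup (j + 1) hj)

theorem IsRow.getD_lfts_eq_zero (hrow : IsRow lfts rgts tops bots) (hle : ∀ b ∈ bots, b ≤ 2)
    (hanti : bots.Pairwise (· ≥ ·)) (h0 : lfts.getD 0 8 = 0) :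
    ∀ j < lfts.length, lfts.getD j 8 = 0 := by
  intro j hj
  induction j with
  | zero => exact h0
  | succ j ih => exact (hrow.rhombus_of_getD_lfts_eq_zero hle hanti hj (ih (by omega))).2

theorem IsRow.eq_diagLabel (hrow : IsRow lfts rgts tops bots) (hle : ∀ b ∈ bots, b ≤ 2)
    (hanti : bots.Pairwise (· ≥ ·)) (h0 : lfts.getD 0 8 = 0) :
    lfts = List.replicate bots.length 0 ∧ rgts = bots.map diagLabel ∧
      tops = bots.dropLast := by
  have hzero := hrow.getD_lfts_eq_zero hle hanti h0
  have ⟨hrgts, hbots, _, hup, _⟩ := hrow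
  refine ⟨?_, ?_, ?_⟩
  · refine List.ext_getElem (by simp [hbots]) fun j hj _ => ?_
    rw [← List.getD_eq_getElem _ 8 hj, hzero j hj, List.getElem_replicate]
  · refine List.ext_getElem (by simp [hbots, hrgts]) fun j hj _ => ?_
    have hup_j := hup j (by omega)
    rw [hzero j (by omega)] at hup_j
    rw [← List.getD_eq_getElem _ 8 hj, List.getElem_map, ← List.getD_eq_getElem _ 8]
    exact eq_diagLabel_of_isPiece (hle _ (bots.getD_mem 8 (by omega))) hup_j
  · refine List.ext_getElem (by simp [hbots]; omega) fun j hj _ => ?_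
    rw [← List.getD_eq_getElem _ 8 hj, List.getElem_dropLast, ← List.getD_eq_getElem _ 8]
    exact (hrow.rhombus_of_getD_lfts_eq_zero hle hanti (by omega) (hzero j (by omega))).1

end

/-- The unique filling of a row with left label 0 and bottom an identity string read
right-to-left: rhombi with sides (0,2)-labels above the 2s, rhombi with (0,1)-labels
above the 1s, one all-0 triangle above the first 0, and all-0 rhombi above the rest. -/
theorem row_filling_zero (n₀ n₁ n₂ : ℕ) (h : 1 ≤ n₀) :
    IsRow (List.replicate (n₂ + n₁ + n₀) 0)
      (List.replicate n₂ 5 ++ List.replicate n₁ 3 ++ List.replicate n₀ 0)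
      (List.replicate n₂ 2 ++ List.replicate n₁ 1 ++ List.replicate (n₀ - 1) 0)
      (List.replicate n₂ 2 ++ List.replicate n₁ 1 ++ List.replicate n₀ 0) ∧
    (List.replicate (n₂ + n₁ + n₀) 0).getD 0 8 = 0 ∧
    (∀ lfts rgts tops,
      IsRow lfts rgts tops
        (List.replicate n₂ 2 ++ List.replicate n₁ 1 ++ List.replicate n₀ 0) →
      lfts.getD 0 8 = 0 →
      lfts = List.replicate (n₂ + n₁ + n₀) 0 ∧
      rgts = List.replicate n₂ 5 ++ List.replicate n₁ 3 ++ List.replicate n₀ 0 ∧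
      tops = List.replicate n₂ 2 ++ List.replicate n₁ 1 ++ List.replicate (n₀ - 1) 0) := by
  set bots := List.replicate n₂ 2 ++ List.replicate n₁ 1 ++ List.replicate n₀ 0
  have hlen : bots.length = n₂ + n₁ + n₀ := by simp [bots, add_assoc]
  have hmap : bots.map diagLabel =
      List.replicate n₂ 5 ++ List.replicate n₁ 3 ++ List.replicate n₀ 0 := by
    simp [bots, diagLabel]
  have hdrop : bots.dropLast =
      List.replicate n₂ 2 ++ List.replicate n₁ 1 ++ List.replicate (n₀ - 1) 0 := by
    obtain ⟨k, rfl⟩ : ∃ k, n₀ = k + 1 := ⟨n₀ - 1, by omega⟩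
    simp [bots, List.replicate_succ', ← List.append_assoc]
  have hle : ∀ b ∈ bots, b ≤ 2 := by
    simp only [bots, List.mem_append, List.mem_replicate]
    omega
  have hanti : bots.Pairwise (· ≥ ·) := by grind
  rw [← hlen, ← hmap, ← hdrop]
  refine ⟨isRow_diagLabel (List.ne_nil_of_length_pos (by omega)) hle,
    List.getD_replicate _ (by omega),
    fun _ _ _ hrow h0 => hrow.eq_diagLabel hle hanti h0⟩
end
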